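/- For every integer n ≥ 2, the assignment (i,j,k) ↦ b(i,j,k) is a bijection from the set of integer triples (i,j,k) satisfying 1 ≤ i, j ≤ n−1 and 0 ≤ k ≤ min{i−1, j−1, n−1−i, n−1−j} onto the set B_n of bigrassmannian permutations in S_n. -/

import Mathlib

namespace Paper

/-- The simple transposition `s_i = (i, i+1)` (1-based) in `S_n`, realized as a
permutation of `Fin n`. For `i` outside `{1, …, n-1}` we set `s i = 1`. -/
def s (n i : ℕ) : Equiv.Perm (Fin n) :=
  if h : 1 ≤ i ∧ i < n then Equiv.swap ⟨i - 1, by omega⟩ ⟨i, by omega⟩ else 1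

/-- The length of a permutation: its number of inversions. -/
def len {n : ℕ} (w : Equiv.Perm (Fin n)) : ℕ :=
  (Finset.univ.filter (fun p : Fin n × Fin n => p.1 < p.2 ∧ w p.2 < w p.1)).card

/-- `i` is a left descent of `w` if `1 ≤ i ≤ n-1` and `ℓ(s_i w) < ℓ(w)`. -/
def IsLeftDescent {n : ℕ} (w : Equiv.Perm (Fin n)) (i : ℕ) : Prop :=
  1 ≤ i ∧ i ≤ n - 1 ∧ len (s n i * w) < len w

/-- `i` is a right descent of `w` if `1 ≤ i ≤ n-1` and `ℓ(w s_i) < ℓ(w)`. -/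
def IsRightDescent {n : ℕ} (w : Equiv.Perm (Fin n)) (i : ℕ) : Prop :=
  1 ≤ i ∧ i ≤ n - 1 ∧ len (w * s n i) < len w

/-- A permutation is bigrassmannian if it has exactly one left descent and
exactly one right descent. -/
def Bigrassmannian {n : ℕ} (w : Equiv.Perm (Fin n)) : Prop :=
  (∃! i, IsLeftDescent w i) ∧ (∃! j, IsRightDescent w j)

/-- One step of the Bruhat order: `w ⋖ t * w` for a transposition `t`
with `ℓ(w) < ℓ(t w)`. -/
def BruhatStep {n : ℕ} (w w' : Equiv.Perm (Fin n)) : Prop :=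
  ∃ a b : Fin n, a ≠ b ∧ w' = Equiv.swap a b * w ∧ len w < len w'

/-- The Bruhat order on `S_n`: the partial order generated by `w < tw` whenever
`t` is a transposition and `ℓ(w) < ℓ(tw)`. -/
def BruhatLE {n : ℕ} : Equiv.Perm (Fin n) → Equiv.Perm (Fin n) → Prop :=
  Relation.ReflTransGen BruhatStep

/-- Strict Bruhat order. -/
def BruhatLT {n : ℕ} (x y : Equiv.Perm (Fin n)) : Prop :=
  BruhatLE x y ∧ x ≠ y

/-- The product `s_a s_{a+1} ⋯ s_b` of consecutive simple transpositions. -/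
def ascRun (n a b : ℕ) : Equiv.Perm (Fin n) :=
  ((List.range (b + 1 - a)).map (fun t => s n (a + t))).prod

/-- For `i ≤ j`: `b(i,j,k) = (s_i ⋯ s_{j+k})(s_{i-1} ⋯ s_{j+k-1}) ⋯ (s_{i-k} ⋯ s_j)`. -/
def bAux (n i j k : ℕ) : Equiv.Perm (Fin n) :=
  ((List.range (k + 1)).map (fun m => ascRun n (i - m) (j + k - m))).prod

/-- The bigrassmannian permutation `b(i,j,k)`; for `j < i` it is `b(j,i,k)⁻¹`. -/
def b (n i j k : ℕ) : Equiv.Perm (Fin n) :=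
  if i ≤ j then bAux n i j k else (bAux n j i k)⁻¹

/-- The value `w(i)` of a permutation `w ∈ S_n` at `i ∈ {1, …, n}`, 1-based. -/
def act {n : ℕ} (w : Equiv.Perm (Fin n)) (i : ℕ) : ℕ :=
  if h : 1 ≤ i ∧ i ≤ n then ((w ⟨i - 1, by omega⟩ : Fin n) : ℕ) + 1 else i

/-- The essential set of a permutation `w ∈ S_n`. -/
def Ess {n : ℕ} (w : Equiv.Perm (Fin n)) : Set (ℕ × ℕ) :=
  {p | 1 ≤ p.1 ∧ p.1 ≤ n - 1 ∧ 1 ≤ p.2 ∧ p.2 ≤ n - 1 ∧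
    p.1 < act w⁻¹ p.2 ∧ p.2 < act w p.1 ∧
    act w (p.1 + 1) ≤ p.2 ∧ act w⁻¹ (p.2 + 1) ≤ p.1}

/-- The rank function `r_w(i,j) = |{k ≤ i : w(k) ≤ j}|` (1-based). -/
def rnk {n : ℕ} (w : Equiv.Perm (Fin n)) (i j : ℕ) : ℕ :=
  ((Finset.Icc 1 i).filter (fun k => act w k ≤ j)).card

/-- The co-rank function `t_w(i,j) = min{i,j} - r_w(i,j)`. -/
def cork {n : ℕ} (w : Equiv.Perm (Fin n)) (i j : ℕ) : ℕ :=
  min i j - rnk w i j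

/-- The set of bigrassmannian permutations `y ≤ w` in Bruhat order. -/
def BSet {n : ℕ} (w : Equiv.Perm (Fin n)) : Set (Equiv.Perm (Fin n)) :=
  {y | Bigrassmannian y ∧ BruhatLE y w}

/-- The set of Bruhat-maximal elements of `BSet w`. -/
def BM {n : ℕ} (w : Equiv.Perm (Fin n)) : Set (Equiv.Perm (Fin n)) :=
  {y ∈ BSet w | ∀ z ∈ BSet w, BruhatLE y z → z = y}

/-!
Extend a permutation `w ∈ S_n` to `ℕ` by fixing every `t ≥ n`. Then `i` is a right descent of `w`
exactly when `w i < w (i - 1)` (0-based values), so `w` is bigrassmannian exactly when `w` and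
`w⁻¹` each have a single descent: `w (t + 1) < w t` only for `t = p`, and `w⁻¹ (t + 1) < w⁻¹ t`
only for `t = q`. Then `w` increases on `[0, p]` and on `[p + 1, ∞)`, so `t ≤ w t` on the first
piece and `w t ≤ t` on the second, and the same holds for `w⁻¹` with `q`. Playing these
inequalities against each other shows that `w` exchanges the adjacent blocks `[lo, p]` and
`[p + 1, hi]`, where `lo = w (p + 1)` and `hi = w p`. Conversely, the word defining `b(i,j,k)`
composes to the block exchange with `lo = min i j - k - 1`, `p = j - 1` and `hi = max i j + k`.
These parameters range exactly over `lo ≤ p < hi < n`, and the block exchange determines them.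
-/

/-- `w` acting on `ℕ` and fixing every `t ≥ n`. Values are 0-based, so the paper's `s_i` exchanges
`i - 1` and `i`. -/
def natPerm {n : ℕ} (w : Equiv.Perm (Fin n)) : Equiv.Perm ℕ :=
  w.extendDomain Fin.equivSubtype

section natPerm

variable {n : ℕ}

lemma natPerm_apply_fin (w : Equiv.Perm (Fin n)) (t : Fin n) : natPerm w t = w t :=
  Equiv.Perm.extendDomain_apply_image w Fin.equivSubtype t

lemma natPerm_apply_of_le (w : Equiv.Perm (Fin n)) {t : ℕ} (ht : n ≤ t) : natPerm w t = t :=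
  Equiv.Perm.extendDomain_apply_not_subtype w Fin.equivSubtype (Nat.not_lt.mpr ht)

lemma natPerm_apply_lt (w : Equiv.Perm (Fin n)) {t : ℕ} (ht : t < n) : natPerm w t < n := by
  simpa only [natPerm_apply_fin w ⟨t, ht⟩] using (w ⟨t, ht⟩).isLt

lemma natPerm_mul (u v : Equiv.Perm (Fin n)) : natPerm (u * v) = natPerm u * natPerm v :=
  map_mul (Equiv.Perm.extendDomainHom Fin.equivSubtype) u v

lemma natPerm_inv (w : Equiv.Perm (Fin n)) : natPerm w⁻¹ = (natPerm w)⁻¹ :=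
  map_inv (Equiv.Perm.extendDomainHom Fin.equivSubtype) w

lemma natPerm_injective : Function.Injective (natPerm (n := n)) :=
  Equiv.Perm.extendDomainHom_injective Fin.equivSubtype

end natPerm

section length

variable {n : ℕ}

lemma len_inv (w : Equiv.Perm (Fin n)) : len w⁻¹ = len w := by
  unfold len
  apply Finset.card_bij' (fun x _ => (w⁻¹ x.2, w⁻¹ x.1)) (fun x _ => (w x.2, w x.1)) <;>
    simp +contextual

lemma len_mul_swap_of_lt (w : Equiv.Perm (Fin n)) {a b : Fin n} (hab : (b : ℕ) = a + 1)
    (h : w a < w b) : len (w * Equiv.swap a b) = len w + 1 := by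
  set τ := Equiv.swap a b
  -- Relabelling pairs by `τ × τ` turns the inversions of `w * τ` into those of `w` plus `(b, a)`.
  have key :
      (Finset.univ.filter fun x : Fin n × Fin n => x.1 < x.2 ∧ (w * τ) x.2 < (w * τ) x.1).map
        (τ.prodCongr τ).toEmbedding =
      insert (b, a) (Finset.univ.filter fun x : Fin n × Fin n => x.1 < x.2 ∧ w x.2 < w x.1) := by
    ext ⟨x, y⟩
    rw [Finset.mem_map_equiv, Finset.mem_filter, Finset.mem_insert, Finset.mem_filter]
    simp only [Finset.mem_univ, true_and, Prod.mk.injEq, Equiv.prodCongr_symm,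
      Equiv.prodCongr_apply, Prod.map, Equiv.Perm.mul_apply, τ, Equiv.symm_swap, Equiv.swap_apply_self]
    have := Fin.lt_def.mp h
    rw [Equiv.swap_apply_def, Equiv.swap_apply_def]
    split_ifs <;> subst_vars <;>
      simp only [Fin.lt_def, ← Fin.val_inj, and_self, true_or, iff_true] at * <;> omega
  unfold len
  rw [← Finset.card_map (τ.prodCongr τ).toEmbedding, key, Finset.card_insert_of_notMem]
  simp only [Finset.mem_filter, Fin.lt_def]
  omega

end length

def HasOnlyDescentAt (f : ℕ → ℕ) (p : ℕ) : Prop :=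
  ∀ t, f (t + 1) < f t ↔ t = p

section descents

variable {n : ℕ}

lemma s_add_one {t : ℕ} (ht : t + 1 < n) : s n (t + 1) = Equiv.swap ⟨t, by omega⟩ ⟨t + 1, ht⟩ := by
  simp [s, ht]

lemma s_of_le {m : ℕ} (hm : n ≤ m) : s n m = 1 :=
  dif_neg (by omega)

lemma isRightDescent_add_one_iff (w : Equiv.Perm (Fin n)) {t : ℕ} (ht : t + 1 < n) :
    IsRightDescent w (t + 1) ↔ w ⟨t + 1, ht⟩ < w ⟨t, by omega⟩ := by
  set a : Fin n := ⟨t, by omega⟩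
  set b : Fin n := ⟨t + 1, ht⟩
  have hab : (b : ℕ) = a + 1 := rfl
  have hs : s n (t + 1) = Equiv.swap a b := s_add_one ht
  rw [IsRightDescent, hs]
  constructor
  · rintro ⟨-, -, hlen⟩
    by_contra! hle
    have := len_mul_swap_of_lt w hab (lt_of_le_of_ne hle (by simp [a, b, Fin.ext_iff]))
    omega
  · intro hlt
    refine ⟨by omega, by omega, ?_⟩
    have := len_mul_swap_of_lt (w * Equiv.swap a b) hab (by simpa using hlt)
    rw [mul_assoc, Equiv.swap_mul_self, mul_one] at this
    omega

lemma isRightDescent_iff (w : Equiv.Perm (Fin n)) (m : ℕ) :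
    IsRightDescent w m ↔ ∃ t, m = t + 1 ∧ natPerm w (t + 1) < natPerm w t := by
  rcases m with _ | t
  · simp [IsRightDescent]
  by_cases ht : t + 1 < n
  · have h0 : natPerm w t = w ⟨t, by omega⟩ := natPerm_apply_fin w ⟨t, by omega⟩
    have h1 : natPerm w (t + 1) = w ⟨t + 1, ht⟩ := natPerm_apply_fin w ⟨t + 1, ht⟩
    simp only [isRightDescent_add_one_iff w ht, add_left_inj, exists_eq_left', h0, h1, Fin.lt_def]
  · have hfix := natPerm_apply_of_le w (not_lt.mp ht)
    have : natPerm w t ≤ t := by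
      rcases lt_or_ge t n with h | h
      · have := natPerm_apply_lt w h; omega
      · rw [natPerm_apply_of_le w h]
    simp only [IsRightDescent, s_of_le (not_lt.mp ht), mul_one, lt_irrefl, and_false,
      false_iff, add_left_inj, exists_eq_left']
    omega

lemma isLeftDescent_iff_isRightDescent_inv (w : Equiv.Perm (Fin n)) (m : ℕ) :
    IsLeftDescent w m ↔ IsRightDescent w⁻¹ m := by
  have hs : (s n m)⁻¹ = s n m := by unfold s; split_ifs <;> simp
  rw [IsLeftDescent, IsRightDescent, ← len_inv (s n m * w), mul_inv_rev, hs, len_inv]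

lemma existsUnique_isRightDescent_iff (w : Equiv.Perm (Fin n)) :
    (∃! m, IsRightDescent w m) ↔ ∃ p, HasOnlyDescentAt (natPerm w) p := by
  simp only [isRightDescent_iff, HasOnlyDescentAt]
  constructor
  · rintro ⟨_, ⟨p, rfl, hp⟩, huniq⟩
    refine ⟨p, fun t => ⟨fun ht => ?_, fun h => h ▸ hp⟩⟩
    have := huniq (t + 1) ⟨t, rfl, ht⟩
    omega
  · rintro ⟨p, hp⟩
    exact ⟨p + 1, ⟨p, rfl, (hp p).2 rfl⟩, by rintro _ ⟨t, rfl, ht⟩; rw [(hp t).1 ht]⟩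

lemma bigrassmannian_iff (w : Equiv.Perm (Fin n)) :
    Bigrassmannian w ↔
      (∃ p, HasOnlyDescentAt (natPerm w) p) ∧ ∃ q, HasOnlyDescentAt ⇑(natPerm w)⁻¹ q := by
  simp only [Bigrassmannian, isLeftDescent_iff_isRightDescent_inv,
    existsUnique_isRightDescent_iff, natPerm_inv]
  exact and_comm

end descents

/-- Exchanges the adjacent blocks `[lo, p]` and `[p + 1, hi]` of `ℕ`, keeping the order inside
each block. -/
def blockSwap (lo p hi x : ℕ) : ℕ :=
  if lo ≤ x ∧ x ≤ p then x + (hi - p) else if p < x ∧ x ≤ hi then x - (p + 1 - lo) else x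

section blockSwap

variable {lo p hi : ℕ}

lemma blockSwap_blockSwap (hlo : lo ≤ p) (hp : p < hi) (x : ℕ) :
    blockSwap lo p hi (blockSwap lo (lo + hi - p - 1) hi x) = x := by
  unfold blockSwap; split_ifs <;> omega

lemma hasOnlyDescentAt_blockSwap (hlo : lo ≤ p) (hp : p < hi) :
    HasOnlyDescentAt (blockSwap lo p hi) p := by
  intro t; unfold blockSwap; split_ifs <;> omega

lemma blockSwap_injective {lo' p' hi' : ℕ} (hlo : lo ≤ p) (hp : p < hi) (hlo' : lo' ≤ p')
    (hp' : p' < hi') (h : blockSwap lo p hi = blockSwap lo' p' hi') :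
    lo = lo' ∧ p = p' ∧ hi = hi' := by
  have hpp : p' = p := by
    refine (hasOnlyDescentAt_blockSwap hlo hp p').1 ?_
    rw [h]
    exact (hasOnlyDescentAt_blockSwap hlo' hp' p').2 rfl
  subst hpp
  have h₀ := congrFun h p'
  have h₁ := congrFun h (p' + 1)
  unfold blockSwap at h₀ h₁
  split_ifs at h₀ h₁ <;> omega

lemma inv_eq_blockSwap {σ : Equiv.Perm ℕ} (hσ : ⇑σ = blockSwap lo p hi) (hlo : lo ≤ p)
    (hp : p < hi) : ⇑σ⁻¹ = blockSwap lo (lo + hi - p - 1) hi := by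
  funext x
  rw [Equiv.Perm.inv_eq_iff_eq, hσ, blockSwap_blockSwap hlo hp]

end blockSwap

lemma bigrassmannian_of_natPerm_eq_blockSwap {n lo p hi : ℕ} {w : Equiv.Perm (Fin n)}
    (hw : ⇑(natPerm w) = blockSwap lo p hi) (hlo : lo ≤ p) (hp : p < hi) : Bigrassmannian w :=
  (bigrassmannian_iff w).2
    ⟨⟨p, hw ▸ hasOnlyDescentAt_blockSwap hlo hp⟩,
      ⟨_, inv_eq_blockSwap hw hlo hp ▸ hasOnlyDescentAt_blockSwap (by omega) (by omega)⟩⟩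

lemma Equiv.Perm.inv_apply_eq_self_of_le {σ : Equiv.Perm ℕ} {n : ℕ}
    (hfix : ∀ t, n ≤ t → σ t = t) (t : ℕ) (ht : n ≤ t) : σ⁻¹ t = t :=
  Equiv.Perm.inv_eq_iff_eq.2 (hfix t ht).symm

namespace HasOnlyDescentAt

variable {σ : Equiv.Perm ℕ} {n p q t u x : ℕ}

lemma lt_apply_add_one (hσ : HasOnlyDescentAt σ p) (ht : t ≠ p) : σ t < σ (t + 1) :=
  lt_of_le_of_ne (not_lt.1 (mt (hσ t).1 ht)) (σ.injective.ne (by omega))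

lemma apply_add_sub_le (hσ : HasOnlyDescentAt σ p) (htu : t ≤ u) (h : p < t ∨ u ≤ p) :
    σ t + (u - t) ≤ σ u := by
  induction u, htu using Nat.le_induction with
  | base => simp
  | succ u htu ih =>
    have := hσ.lt_apply_add_one (show u ≠ p by omega)
    have := ih (by omega)
    omega

lemma le_apply (hσ : HasOnlyDescentAt σ p) (ht : t ≤ p) : t ≤ σ t := by
  have := hσ.apply_add_sub_le (Nat.zero_le t) (Or.inr ht)
  omega

lemma apply_le (hσ : HasOnlyDescentAt σ p) (hfix : ∀ t, n ≤ t → σ t = t) (ht : p < t) :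
    σ t ≤ t := by
  have := hσ.apply_add_sub_le (u := t + n) (by omega) (Or.inl ht)
  rw [hfix (t + n) (by omega)] at this
  omega

lemma lt_apply (hσ : HasOnlyDescentAt σ p) : p < σ p := by
  have hp := hσ.le_apply le_rfl
  by_contra! hle
  have hfixed : ∀ t ≤ p, σ t = t := fun t ht => by
    have := hσ.apply_add_sub_le ht (Or.inr le_rfl)
    have := hσ.le_apply ht
    omega
  have hdesc := (hσ p).2 rfl
  have := σ.injective (hfixed (σ (p + 1)) (by omega))
  omega

lemma apply_add_one_le (hσ : HasOnlyDescentAt σ p) (hfix : ∀ t, n ≤ t → σ t = t) :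
    σ (p + 1) ≤ p := by
  have hp := hσ.apply_le hfix (show p < p + 1 by omega)
  by_contra! hle
  have hfixed : ∀ t, p < t → σ t = t := fun t ht => by
    have := hσ.apply_add_sub_le (show p + 1 ≤ t by omega) (Or.inl (show p < p + 1 by omega))
    have := hσ.apply_le hfix ht
    omega
  have hdesc := (hσ p).2 rfl
  have := σ.injective (hfixed (σ p) (by omega))
  omega

lemma apply_add_one_le_of_inv (hp : HasOnlyDescentAt σ p) (hq : HasOnlyDescentAt ⇑σ⁻¹ q)
    (hfix : ∀ t, n ≤ t → σ t = t) : σ (p + 1) ≤ q := by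
  by_contra! hlt
  have := hq.apply_le (Equiv.Perm.inv_apply_eq_self_of_le hfix) hlt
  have := hp.apply_add_one_le hfix
  simp only [Equiv.Perm.coe_inv, Equiv.symm_apply_apply] at *
  omega

lemma lt_apply_of_inv (hp : HasOnlyDescentAt σ p) (hq : HasOnlyDescentAt ⇑σ⁻¹ q) :
    q < σ p := by
  by_contra! hle
  have := hq.le_apply hle
  have := hp.lt_apply
  simp only [Equiv.Perm.coe_inv, Equiv.symm_apply_apply] at *
  omega

lemma apply_eq_self_of_lt (hp : HasOnlyDescentAt σ p) (hq : HasOnlyDescentAt ⇑σ⁻¹ q)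
    (hfix : ∀ t, n ≤ t → σ t = t) (hx : x < σ (p + 1)) : σ x = x := by
  have hlo := hp.apply_add_one_le_of_inv hq hfix
  have h₁ := hq.apply_add_sub_le hx.le (Or.inr hlo)
  simp only [Equiv.Perm.coe_inv, Equiv.symm_apply_apply] at h₁
  have h₂ := hp.le_apply (t := σ⁻¹ x) (by simp only [Equiv.Perm.coe_inv]; omega)
  have h₃ := hq.le_apply (t := x) (by omega)
  simp only [Equiv.Perm.coe_inv, Equiv.apply_symm_apply] at h₂ h₃
  exact (σ.symm_apply_eq.1 (by omega)).symm

lemma apply_eq_self_of_gt (hp : HasOnlyDescentAt σ p) (hq : HasOnlyDescentAt ⇑σ⁻¹ q)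
    (hfix : ∀ t, n ≤ t → σ t = t) (hx : σ p < x) : σ x = x := by
  have hhi := hp.lt_apply_of_inv hq
  have h₁ := hq.apply_add_sub_le hx.le (Or.inl hhi)
  simp only [Equiv.Perm.coe_inv, Equiv.symm_apply_apply] at h₁
  have h₂ := hp.apply_le hfix (t := σ⁻¹ x) (by simp only [Equiv.Perm.coe_inv]; omega)
  have h₃ := hq.apply_le (Equiv.Perm.inv_apply_eq_self_of_le hfix) (t := x) (by omega)
  simp only [Equiv.Perm.coe_inv, Equiv.apply_symm_apply] at h₂ h₃
  exact (σ.symm_apply_eq.1 (by omega)).symm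

lemma apply_eq_add_of_le_of_le (hp : HasOnlyDescentAt σ p) (hq : HasOnlyDescentAt ⇑σ⁻¹ q)
    (hx₁ : σ (p + 1) ≤ x) (hx₂ : x ≤ p) :
    σ x = x + (σ p - p) := by
  have hupper := hp.apply_add_sub_le hx₂ (Or.inr le_rfl)
  have hq_lt : q < σ x := by
    by_contra! hle
    have h₁ := hq.le_apply hle
    have h₂ := hp.le_apply hx₂
    simp only [Equiv.Perm.coe_inv, Equiv.symm_apply_apply] at h₁
    have hfixed : σ.symm x = x := σ.symm_apply_eq.2 (by omega)
    have h₃ := hq.apply_add_sub_le hx₁ (Or.inr (by omega))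
    simp only [Equiv.Perm.coe_inv, Equiv.symm_apply_apply, hfixed] at h₃
    omega
  have hlower := hq.apply_add_sub_le (show σ x ≤ σ p by omega) (Or.inl hq_lt)
  simp only [Equiv.Perm.coe_inv, Equiv.symm_apply_apply] at hlower
  have := hp.lt_apply
  omega

lemma apply_eq_sub_of_lt_of_le (hp : HasOnlyDescentAt σ p) (hq : HasOnlyDescentAt ⇑σ⁻¹ q)
    (hfix : ∀ t, n ≤ t → σ t = t) (hx₁ : p < x) (hx₂ : x ≤ σ p) :
    σ x = x - (p + 1 - σ (p + 1)) := by
  have hlower := hp.apply_add_sub_le (show p + 1 ≤ x by omega) (Or.inl (by omega))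
  have hle_q : σ x ≤ q := by
    by_contra! hlt
    have h₁ := hq.apply_le (Equiv.Perm.inv_apply_eq_self_of_le hfix) hlt
    have h₂ := hp.apply_le hfix hx₁
    simp only [Equiv.Perm.coe_inv, Equiv.symm_apply_apply] at h₁
    have hfixed : σ.symm x = x := σ.symm_apply_eq.2 (by omega)
    have h₃ := hq.apply_add_sub_le hx₂ (Or.inl (by omega))
    simp only [Equiv.Perm.coe_inv, Equiv.symm_apply_apply, hfixed] at h₃
    omega
  have hupper := hq.apply_add_sub_le (show σ (p + 1) ≤ σ x by omega) (Or.inr hle_q)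
  simp only [Equiv.Perm.coe_inv, Equiv.symm_apply_apply] at hupper
  have := hp.apply_add_one_le hfix
  omega

theorem eq_blockSwap (hp : HasOnlyDescentAt σ p) (hq : HasOnlyDescentAt ⇑σ⁻¹ q)
    (hfix : ∀ t, n ≤ t → σ t = t) : ⇑σ = blockSwap (σ (p + 1)) p (σ p) := by
  funext x
  have := hp.lt_apply
  have := hp.apply_add_one_le hfix
  unfold blockSwap
  split_ifs with hleft hright
  · exact hp.apply_eq_add_of_le_of_le hq hleft.1 hleft.2
  · exact hp.apply_eq_sub_of_lt_of_le hq hfix hright.1 hright.2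
  · rcases lt_or_gt_of_ne (show x ≠ σ p by omega) with hx | hx
    · exact hp.apply_eq_self_of_lt hq hfix (by omega)
    · exact hp.apply_eq_self_of_gt hq hfix hx

end HasOnlyDescentAt

theorem exists_natPerm_eq_blockSwap {n : ℕ} {w : Equiv.Perm (Fin n)} (hw : Bigrassmannian w) :
    ∃ lo p hi, lo ≤ p ∧ p < hi ∧ hi < n ∧ ⇑(natPerm w) = blockSwap lo p hi := by
  obtain ⟨⟨p, hp⟩, ⟨q, hq⟩⟩ := (bigrassmannian_iff w).1 hw
  have hfix : ∀ t, n ≤ t → natPerm w t = t := fun t => natPerm_apply_of_le w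
  have hpn : p < n := by
    by_contra! hle
    have := hp.lt_apply
    rw [hfix p hle] at this
    omega
  exact ⟨_, p, _, hp.apply_add_one_le hfix, hp.lt_apply, natPerm_apply_lt w hpn,
    hp.eq_blockSwap hq hfix⟩

section

variable {n : ℕ}

lemma natPerm_s_add_one {t : ℕ} (ht : t + 1 < n) :
    ⇑(natPerm (s n (t + 1))) = blockSwap t t (t + 1) := by
  funext x
  rcases lt_or_ge x n with hx | hx
  · rw [show x = ((⟨x, hx⟩ : Fin n) : ℕ) from rfl, natPerm_apply_fin, s_add_one ht,
      Equiv.swap_apply_def]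
    unfold blockSwap
    split_ifs <;> simp_all [Fin.ext_iff] <;> omega
  · rw [natPerm_apply_of_le _ hx]
    unfold blockSwap
    split_ifs <;> omega

lemma ascRun_add_one {a c : ℕ} (h : a ≤ c + 1) :
    ascRun n a (c + 1) = ascRun n a c * s n (c + 1) := by
  unfold ascRun
  rw [show c + 1 + 1 - a = c + 1 - a + 1 by omega, List.range_succ, List.map_append,
    List.prod_append, List.map_singleton, List.prod_singleton,
    show a + (c + 1 - a) = c + 1 by omega]

lemma natPerm_ascRun {a c : ℕ} (ha : 1 ≤ a) (hac : a ≤ c) (hc : c < n) :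
    ⇑(natPerm (ascRun n a c)) = blockSwap (a - 1) (c - 1) c := by
  induction c, hac using Nat.le_induction with
  | base =>
    obtain ⟨t, rfl⟩ : ∃ t, a = t + 1 := ⟨a - 1, by omega⟩
    rw [show ascRun n (t + 1) (t + 1) = s n (t + 1) by simp [ascRun], natPerm_s_add_one hc]
    rfl
  | succ c hac ih =>
    rw [ascRun_add_one (by omega), natPerm_mul, Equiv.Perm.coe_mul, ih (by omega), natPerm_s_add_one hc]
    funext x
    simp only [Function.comp_apply]
    unfold blockSwap
    split_ifs <;> omega

lemma bAux_add_one {i j k : ℕ} :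
    bAux n i j (k + 1) = ascRun n i (j + k + 1) * bAux n (i - 1) j k := by
  unfold bAux
  rw [List.range_succ_eq_map, List.map_cons, List.prod_cons, List.map_map]
  congr 2
  refine List.map_congr_left fun m _ => ?_
  simp only [Function.comp_apply]
  congr 1 <;> omega

lemma natPerm_bAux {i j k : ℕ} (hk : k + 1 ≤ i) (hij : i ≤ j) (hj : j + k < n) :
    ⇑(natPerm (bAux n i j k)) = blockSwap (i - k - 1) (j - 1) (j + k) := by
  induction k generalizing i with
  | zero => simpa [bAux] using natPerm_ascRun (by omega) hij (by omega)
  | succ k ih =>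
    rw [bAux_add_one, natPerm_mul, Equiv.Perm.coe_mul, ih (by omega) (by omega) (by omega),
      natPerm_ascRun (by omega) (by omega) (by omega)]
    funext x
    simp only [Function.comp_apply]
    unfold blockSwap
    split_ifs <;> omega

lemma natPerm_b {i j k : ℕ} (hi : 1 ≤ i) (hj : 1 ≤ j)
    (hk : k ≤ min (min (i - 1) (j - 1)) (min (n - 1 - i) (n - 1 - j))) (hin : i ≤ n - 1)
    (hjn : j ≤ n - 1) :
    ⇑(natPerm (b n i j k)) = blockSwap (min i j - k - 1) (j - 1) (max i j + k) := by
  unfold b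
  split_ifs with hij
  · rw [natPerm_bAux (by omega) hij (by omega)]
    congr 1 <;> omega
  · rw [natPerm_inv, inv_eq_blockSwap (natPerm_bAux (by omega) (by omega) (by omega))
      (by omega) (by omega)]
    congr 1 <;> omega

end

theorem stmt5_general (n : ℕ) :
    Set.BijOn (fun p : ℕ × ℕ × ℕ => b n p.1 p.2.1 p.2.2)
      {p : ℕ × ℕ × ℕ | 1 ≤ p.1 ∧ p.1 ≤ n - 1 ∧ 1 ≤ p.2.1 ∧ p.2.1 ≤ n - 1 ∧
        p.2.2 ≤ min (min (p.1 - 1) (p.2.1 - 1)) (min (n - 1 - p.1) (n - 1 - p.2.1))}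
      {w : Equiv.Perm (Fin n) | Bigrassmannian w} := by
  refine ⟨?_, ?_, ?_⟩
  · rintro ⟨i, j, k⟩ ⟨hi, hin, hj, hjn, hk⟩
    exact bigrassmannian_of_natPerm_eq_blockSwap (natPerm_b hi hj hk hin hjn) (by omega) (by omega)
  · rintro ⟨i, j, k⟩ ⟨hi, hin, hj, hjn, hk⟩ ⟨i', j', k'⟩ ⟨hi', hin', hj', hjn', hk'⟩ h
    dsimp only at *
    have hblock := natPerm_b hi hj hk hin hjn
    rw [h, natPerm_b hi' hj' hk' hin' hjn'] at hblock
    have := blockSwap_injective (by omega) (by omega) (by omega) (by omega) hblock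
    simp only [Prod.mk.injEq]
    omega
  · intro w hw
    obtain ⟨lo, p, hi, hlo, hp, hhi, hblock⟩ := exists_natPerm_eq_blockSwap hw
    have hk : min (p - lo) (hi - p - 1) ≤ min (min (lo + hi - p - 1) (p + 1 - 1))
        (min (n - 1 - (lo + hi - p)) (n - 1 - (p + 1))) := by omega
    refine ⟨(lo + hi - p, p + 1, min (p - lo) (hi - p - 1)), ⟨?_, ?_, ?_, ?_, hk⟩,
      natPerm_injective (DFunLike.coe_injective ?_)⟩
    all_goals dsimp only
    any_goals omega
    rw [natPerm_b (by omega) (by omega) hk (by omega) (by omega), hblock]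
    congr 1 <;> omega

theorem stmt5 (n : ℕ) (hn : 2 ≤ n) :
    Set.BijOn (fun p : ℕ × ℕ × ℕ => b n p.1 p.2.1 p.2.2)
      {p : ℕ × ℕ × ℕ | 1 ≤ p.1 ∧ p.1 ≤ n - 1 ∧ 1 ≤ p.2.1 ∧ p.2.1 ≤ n - 1 ∧
        p.2.2 ≤ min (min (p.1 - 1) (p.2.1 - 1)) (min (n - 1 - p.1) (n - 1 - p.2.1))}
      {w : Equiv.Perm (Fin n) | Bigrassmannian w} :=
  stmt5_general n

end Paper
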